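/- Let y : [t₀,∞) → [0,∞) be C¹ with y'(t) + (α/(1+t))·y(t) ≤ K·(1+t)^{-2-2β} for t ≥ t₀, where α > 1 + 2β and β, K ≥ 0. Then y(t) ≤ C·(y(t₀)+K)·(1+t)^{-1-2β}. -/

import Mathlib

/-!
With the integrating factor `(1+t)^α` and `δ = α - 1 - 2β > 0`, the inequality says that
`y(t) (1+t)^α - (K/δ) (1+t)^δ` is nonincreasing. Hence
`y(t) (1+t)^α ≤ y(t₀) (1+t₀)^α + (K/δ) (1+t)^δ`, and dividing by `(1+t)^α` leaves the decay
`(1+t)^{δ-α} = (1+t)^{-1-2β}`; the first term decays even faster because `α > 1 + 2β`.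
-/

open Set

theorem HasDerivAt.mul_one_add_rpow {y : ℝ → ℝ} {y' t : ℝ} (hy : HasDerivAt y y' t)
    (ht : 0 < 1 + t) (α : ℝ) :
    HasDerivAt (fun s => y s * (1 + s) ^ α) ((y' + α / (1 + t) * y t) * (1 + t) ^ α) t := by
  have hpow : HasDerivAt (fun s : ℝ => (1 + s) ^ α) (1 * α * (1 + t) ^ (α - 1)) t :=
    ((hasDerivAt_id t).const_add 1).rpow_const (Or.inl ht.ne')
  refine (hy.mul hpow).congr_deriv ?_
  rw [Real.rpow_sub_one ht.ne']
  field_simp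

theorem mul_one_add_rpow_le_of_deriv_le {y y' : ℝ → ℝ} {t₀ α δ K : ℝ}
    (ht₀ : -1 < t₀) (hδ : 0 < δ)
    (hderiv : ∀ t, t₀ ≤ t → HasDerivAt y (y' t) t)
    (hineq : ∀ t, t₀ ≤ t → y' t + α / (1 + t) * y t ≤ K * (1 + t) ^ (δ - 1 - α))
    {t : ℝ} (ht : t₀ ≤ t) :
    y t * (1 + t) ^ α ≤ y t₀ * (1 + t₀) ^ α + K / δ * ((1 + t) ^ δ - (1 + t₀) ^ δ) := by
  set w : ℝ → ℝ := fun s => y s * (1 + s) ^ α - K / δ * (1 + s) ^ δ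
  set w' : ℝ → ℝ := fun s => (y' s + α / (1 + s) * y s) * (1 + s) ^ α - K * (1 + s) ^ (δ - 1)
  have hw : ∀ s, t₀ ≤ s → HasDerivAt w (w' s) s := by
    intro s hs
    have hs1 : 0 < 1 + s := by linarith
    have hpow : HasDerivAt (fun s : ℝ => (1 + s) ^ δ) (1 * δ * (1 + s) ^ (δ - 1)) s :=
      ((hasDerivAt_id s).const_add 1).rpow_const (Or.inl hs1.ne')
    refine (((hderiv s hs).mul_one_add_rpow hs1 α).sub (hpow.const_mul (K / δ))).congr_deriv ?_
    simp only [w']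
    field_simp
  have hw'_nonpos : ∀ s, t₀ ≤ s → w' s ≤ 0 := by
    intro s hs
    have hs1 : 0 < 1 + s := by linarith
    have := mul_le_mul_of_nonneg_right (hineq s hs) (Real.rpow_nonneg hs1.le α)
    rw [mul_assoc, ← Real.rpow_add hs1, sub_add_cancel] at this
    exact sub_nonpos.mpr this
  have hanti : AntitoneOn w (Ici t₀) := by
    refine antitoneOn_of_hasDerivWithinAt_nonpos (convex_Ici t₀)
      (fun s hs => (hw s hs).continuousAt.continuousWithinAt)
      (fun s hs => (hw s (le_of_lt (by simpa using hs))).hasDerivWithinAt)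
      (fun s hs => hw'_nonpos s (le_of_lt (by simpa using hs)))
  have hwt : w t ≤ w t₀ := hanti self_mem_Ici ht ht
  simp only [w] at hwt
  linarith

theorem stmt_5_general (t₀ α β K : ℝ) (ht₀ : 0 ≤ t₀) (hα : 1 + 2 * β < α) (hK : 0 ≤ K)
    (y y' : ℝ → ℝ) (hpos : ∀ t, t₀ ≤ t → 0 ≤ y t)
    (hderiv : ∀ t, t₀ ≤ t → HasDerivAt y (y' t) t)
    (hineq : ∀ t, t₀ ≤ t → y' t + α / (1 + t) * y t ≤ K * (1 + t) ^ (-2 - 2 * β)) :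
    ∃ C > 0, ∀ t, t₀ ≤ t → y t ≤ C * (y t₀ + K) * (1 + t) ^ (-1 - 2 * β) := by
  set δ := α - 1 - 2 * β with hδdef
  have hδ : 0 < δ := by linarith
  refine ⟨(1 + t₀) ^ α + 1 / δ, by positivity, fun t ht => ?_⟩
  have h1t : 1 ≤ 1 + t := by linarith
  have hint := mul_one_add_rpow_le_of_deriv_le (δ := δ) (by linarith) hδ hderiv
    (fun s hs => (hineq s hs).trans_eq (by rw [hδdef]; ring_nf)) ht
  set p := (1 + t) ^ α
  set q := (1 + t) ^ (-1 - 2 * β)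
  have hp : 0 < p := by positivity
  have hpq : p * q = (1 + t) ^ δ := by
    rw [← Real.rpow_add (by linarith), hδdef]; ring_nf
  have hpq_one : 1 ≤ p * q := hpq ▸ Real.one_le_rpow h1t hδ.le
  have hy₀ : 0 ≤ y t₀ := hpos t₀ le_rfl
  have hA : 0 ≤ (1 + t₀) ^ α := by positivity
  have hq : 0 ≤ q := by positivity
  have hyp : y t * p ≤ (y t₀ * (1 + t₀) ^ α + K / δ) * q * p := by
    have : 0 ≤ K / δ * (1 + t₀) ^ δ := by positivity
    rw [← hpq] at hint
    nlinarith [mul_le_mul_of_nonneg_left hpq_one (mul_nonneg hy₀ hA)]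
  calc y t ≤ (y t₀ * (1 + t₀) ^ α + K / δ) * q := le_of_mul_le_mul_right hyp hp
    _ ≤ ((1 + t₀) ^ α + 1 / δ) * (y t₀ + K) * q := by
      rw [div_eq_mul_one_div K δ]
      have : 0 ≤ 1 / δ := by positivity
      nlinarith [mul_nonneg (mul_nonneg hy₀ this) hq, mul_nonneg (mul_nonneg hK hA) hq]

/-- Weighted Gronwall lemma variant: `y' + (α/(1+t)) y ≤ K (1+t)^{-2-2β}` with
`α > 1 + 2β` gives `y(t) ≲ (y(t₀)+K)(1+t)^{-1-2β}`. -/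
theorem stmt_5 (t₀ α β K : ℝ) (ht₀ : 0 ≤ t₀) (hβ : 0 ≤ β) (hα : 1 + 2 * β < α) (hK : 0 ≤ K)
    (y y' : ℝ → ℝ) (hpos : ∀ t, t₀ ≤ t → 0 ≤ y t)
    (hderiv : ∀ t, t₀ ≤ t → HasDerivAt y (y' t) t)
    (hineq : ∀ t, t₀ ≤ t → y' t + α / (1 + t) * y t ≤ K * (1 + t) ^ (-2 - 2 * β)) :
    ∃ C > 0, ∀ t, t₀ ≤ t → y t ≤ C * (y t₀ + K) * (1 + t) ^ (-1 - 2 * β) :=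
  stmt_5_general t₀ α β K ht₀ hα hK y y' hpos hderiv hineq
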